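/- Let Z, {x}, W be pairwise disjoint node sets in an ADMG G with node set V. Let O₁ be the set of nodes v ∈ V such that some directed path from x to v contains a node of W, and let O₃ be the set of nodes v ∈ V such that some walk from Z to v is open given W and does not end with a segment of the form x → … → v (a final subwalk starting at x and consisting solely of directed edges pointing toward v). If no walk from Z to x is open given W, then there is no node y such that (Z,W) is a valid conditional instrumental set relative to (x,y) in G; otherwise, the set of nodes y such that (Z,W) is a valid conditional instrumental set relative to (x,y) in G equals V ∖ (O₁ ∪ O₃ ∪ Z ∪ W ∪ {x}). -/

import Mathlib

/-- Edge type of a step on a walk in a mixed graph, relative to the direction of travel: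
`fwd` is a directed edge pointing forward, `back` a directed edge pointing backward,
`bi` a bidirected edge. -/
inductive EdgeDir : Type
  | fwd
  | back
  | bi
  deriving DecidableEq

/-- The edge has an arrowhead at its second endpoint. -/
def EdgeDir.arrowSnd : EdgeDir → Prop
  | .fwd => True
  | .back => False
  | .bi => True

/-- The edge has an arrowhead at its first endpoint. -/
def EdgeDir.arrowFst : EdgeDir → Prop
  | .fwd => False
  | .back => True
  | .bi => True

/-- The common node between consecutive walk edges `e₁, e₂` is a collider:
both edges have an arrowhead at it. -/
def IsColliderPair (e₁ e₂ : EdgeDir) : Prop := e₁.arrowSnd ∧ e₂.arrowFst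

/-- A mixed graph: a set of directed edges and a set of bidirected edges on node type `V`. -/
structure MixedGraph (V : Type) where
  dir : V → V → Prop
  bidir : V → V → Prop

namespace MixedGraph

variable {V : Type}

/-- `G` is an acyclic directed mixed graph: the bidirected edges are symmetric and
the directed edges contain no directed cycle. -/
def IsADMG (G : MixedGraph V) : Prop :=
  (∀ a b, G.bidir a b → G.bidir b a) ∧ ∀ v, ¬ Relation.TransGen G.dir v v

/-- There is an edge of type `e` between `a` and `b` (in this travel direction). -/
def IsEdge (G : MixedGraph V) : EdgeDir → V → V → Prop
  | .fwd, a, b => G.dir a b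
  | .back, a, b => G.dir b a
  | .bi, a, b => G.bidir a b

/-- Walks in a mixed graph. -/
inductive Walk (G : MixedGraph V) : V → V → Type
  | nil (v : V) : Walk G v v
  | cons {a b c : V} (e : EdgeDir) (hab : G.IsEdge e a b) (w : Walk G b c) : Walk G a c

namespace Walk

variable {G : MixedGraph V}

/-- The list of nodes of a walk, in order (with multiplicity). -/
def support : {a b : V} → G.Walk a b → List V
  | a, _, .nil _ => [a]
  | a, _, .cons _ _ w => a :: w.support

/-- The list of edge types along a walk. -/
def edges : {a b : V} → G.Walk a b → List EdgeDir
  | _, _, .nil _ => []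
  | _, _, .cons e _ w => e :: w.edges

/-- All edges of the walk are directed and point toward the end of the walk. -/
def AllFwd : {a b : V} → G.Walk a b → Prop
  | _, _, .nil _ => True
  | _, _, .cons e _ w => e = EdgeDir.fwd ∧ w.AllFwd

/-- Auxiliary predicate: the current node `b` was reached via an edge of type `e₁` and
the walk continues with `w`; every interior node from `b` onward that is a collider is in `W`
and every interior node from `b` onward that is a non-collider is not in `W`. -/
def openFrom (W : Set V) : EdgeDir → (b : V) → {c : V} → G.Walk b c → Prop
  | _, _, _, .nil _ => True
  | e₁, b, _, @Walk.cons _ _ _ m _ e₂ _ w =>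
      (IsColliderPair e₁ e₂ → b ∈ W) ∧ (¬ IsColliderPair e₁ e₂ → b ∉ W) ∧
      openFrom W e₂ m w

/-- A walk is open given `W` if every collider on it lies in `W` and no non-collider
on it lies in `W`. -/
def IsOpen {a b : V} (W : Set V) (w : G.Walk a b) : Prop :=
  match w with
  | .nil _ => True
  | @Walk.cons _ _ _ m _ e _ w' => openFrom W e m w'

/-- The walk ends with a segment of the form `x → ⋯ → end`: it has a final subwalk that
starts at `x` and consists solely of directed edges pointing toward the end of the walk. -/
def EndsWithDirFrom (x : V) : {a b : V} → G.Walk a b → Prop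
  | a, _, .nil _ => a = x
  | a, _, .cons e _ w => (a = x ∧ e = EdgeDir.fwd ∧ w.AllFwd) ∨ w.EndsWithDirFrom x

/-- The first edge of the walk has an arrowhead at the start node. -/
def firstArrowIn : {a b : V} → G.Walk a b → Prop
  | _, _, .nil _ => False
  | _, _, .cons e _ _ => e.arrowFst

/-- The last edge of the walk has an arrowhead at the end node. -/
def lastArrowIn : {a b : V} → G.Walk a b → Prop
  | _, _, .nil _ => False
  | _, _, .cons e _ (.nil _) => e.arrowSnd
  | _, _, .cons _ _ (.cons e h w) => lastArrowIn (.cons e h w)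

/-- For each interior node of the walk, the pair of edges incident to it on the walk,
together with the node itself. -/
def colliderTriples {a b : V} (w : G.Walk a b) : List (EdgeDir × EdgeDir × V) :=
  w.edges.zip (w.edges.tail.zip w.support.tail)

end Walk

/-- `X` and `Z` are d-connected given `C`: some walk from a node of `X` to a node of `Z`
is open given `C`. -/
def dConn (G : MixedGraph V) (X Z C : Set V) : Prop :=
  ∃ x ∈ X, ∃ z ∈ Z, ∃ w : G.Walk x z, w.IsOpen C

/-- The descendants of `x` (including `x` itself). -/
def desc (G : MixedGraph V) (x : V) : Set V := {v | Relation.ReflTransGen G.dir x v}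

/-- The descendants of a set of nodes. -/
def descSet (G : MixedGraph V) (S : Set V) : Set V :=
  {v | ∃ s ∈ S, Relation.ReflTransGen G.dir s v}

/-- The ancestors of a set of nodes (including the set itself). -/
def anc (G : MixedGraph V) (S : Set V) : Set V :=
  {v | ∃ s ∈ S, Relation.ReflTransGen G.dir v s}

/-- The parents of a set of nodes. -/
def pa (G : MixedGraph V) (S : Set V) : Set V := {p | ∃ s ∈ S, G.dir p s}

/-- `causal_G(x,y)`: the nodes `v ≠ x` lying on a proper directed path from `x` to `y`. -/
def causal (G : MixedGraph V) (x y : V) : Set V :=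
  {v | v ≠ x ∧ ∃ w : G.Walk x y, w.AllFwd ∧ w.support.Nodup ∧ v ∈ w.support}

/-- The forbidden nodes `forb_G(x,y) = de_G(causal_G(x,y)) ∪ {x}`. -/
def forb (G : MixedGraph V) (x y : V) : Set V := G.descSet (G.causal x y) ∪ {x}

/-- `G̃`: the graph `G` with every directed edge from `x` to a node of `causal_G(x,y)` removed. -/
def tilde (G : MixedGraph V) (x y : V) : MixedGraph V where
  dir a b := G.dir a b ∧ ¬(a = x ∧ b ∈ G.causal x y)
  bidir := G.bidir

/-- `(Z, W)` is a valid conditional instrumental set relative to `(x, y)` in `G`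
(the graphical criterion of Henckel et al., taken as the definition): the sets
`{x,y}`, `Z`, `W` are pairwise disjoint, `(Z ∪ W) ∩ forb_G(x,y) = ∅`, `x ⊄⊥_G Z | W`,
and `y ⊥_G̃ Z | W`. -/
def ValidCIS (G : MixedGraph V) (x y : V) (Z W : Set V) : Prop :=
  x ≠ y ∧ x ∉ Z ∧ x ∉ W ∧ y ∉ Z ∧ y ∉ W ∧ Disjoint Z W ∧
  (Z ∪ W) ∩ G.forb x y = ∅ ∧
  G.dConn {x} Z W ∧
  ¬ (G.tilde x y).dConn {y} Z W

/-- `W` is a nearest separator with respect to `(y, z, R)` in `H` (with ambient node `x`). -/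
def NearestSep (H : MixedGraph V) (x y z : V) (R : Set V) (W : Set V) : Prop :=
  W ⊆ R ∩ H.anc {y, z} ∧
  ¬ H.dConn {y} {z} W ∧
  ∀ w ∈ W, ∀ W' ⊆ (R ∩ H.anc {y, z}) \ {x, y, w},
    H.dConn {w} {z} W' → H.dConn {y} {z} W'

/-- `dis_{G,W}(u)`: the nodes connected to `u` via a path of bidirected edges with no
node in `W` (with `u ∈ dis_{G,W}(u)`). -/
def dis (G : MixedGraph V) (W : Set V) (u : V) : Set V :=
  {v | Relation.ReflTransGen (fun a b => G.bidir a b ∧ a ∉ W ∧ b ∉ W) u v}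

/-- `dis⁺_{G,W}(u) = (dis_{G,W}(u) ∪ pa_G(dis_{G,W}(u))) ∖ W`. -/
def disPlus (G : MixedGraph V) (W : Set V) (u : V) : Set V :=
  (G.dis W u ∪ G.pa (G.dis W u)) \ W

/-- `W^opt` of Henckel et al. -/
def Wopt (G : MixedGraph V) (x y : V) : Set V := G.disPlus {x} y \ {x, y}

/-- `Z^opt` of Henckel et al. -/
def Zopt (G : MixedGraph V) (x y : V) : Set V :=
  G.disPlus {y} x \ (G.Wopt x y ∪ {x, y})

/-- The latent projection of `G` over the latent nodes `L`: a directed edge exactly when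
`G` has a directed path whose non-endpoint nodes lie in `L`, and a bidirected edge exactly
when `G` has a path whose non-endpoint nodes are non-colliders lying in `L` and whose first
and last edges have an arrowhead at the respective endpoint. -/
def latentProj (G : MixedGraph V) (L : Set V) : MixedGraph V where
  dir a b := a ∉ L ∧ b ∉ L ∧ ∃ w : G.Walk a b,
    w.edges ≠ [] ∧ w.AllFwd ∧ w.support.Nodup ∧ ∀ v ∈ w.support.tail.dropLast, v ∈ L
  bidir a b := a ∉ L ∧ b ∉ L ∧ ∃ w : G.Walk a b,
    w.support.Nodup ∧ w.firstArrowIn ∧ w.lastArrowIn ∧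
    (∀ v ∈ w.support.tail.dropLast, v ∈ L) ∧
    ∀ t ∈ w.colliderTriples, ¬ IsColliderPair t.1 t.2.1

end MixedGraph

/-- The moralization of a DAG with edge relation `E` contains the (undirected) edge
`a − b` (for `a ≠ b`) exactly when `E a b`, or `E b a`, or `a` and `b` have a common child. -/
def MoralEdge {α : Type} (E : α → α → Prop) (a b : α) : Prop :=
  a ≠ b ∧ (E a b ∨ E b a ∨ ∃ c, E a c ∧ E b c)


/-!
Write `C = causal(x,y)` and `D = de(C)`. Since `x ∉ W`, a node of `W` on a proper directed
path from `x` to `y` lies in `C`, so `y ∉ O₁` says exactly that `C` avoids `W`.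

If `(Z,W)` is valid, then `D` avoids `Z ∪ W`, so an open walk from `Z` to `y` can only
enter `D` through an arrowhead, after which every node is a non-collider outside `W` and the
walk is a directed path. Unless it enters `D` by an edge `x → c`, the walk uses no edge deleted
in `G̃` and d-connects `y` and `Z` in `G̃`; hence `y ∉ O₃`.

Conversely, let `y ∉ O₁ ∪ O₃`, so that every open walk from `Z` to `y` ends with `x → ⋯ → y`.
A node of `(Z ∪ W) ∩ D` below `c ∈ C`, joined to the directed path `c → ⋯ → y`, would yield an
open walk from `Z` to `y` ending otherwise. An open walk of `G̃` from `Z` to `y` is open in `G`,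
so it would end with `x → v → ⋯ → y` with `v ∈ C`, an edge deleted in `G̃`.
-/

namespace EdgeDir

def flip : EdgeDir → EdgeDir
  | .fwd => .back
  | .back => .fwd
  | .bi => .bi

lemma isColliderPair_flip (e₁ e₂ : EdgeDir) :
    IsColliderPair e₂.flip e₁.flip ↔ IsColliderPair e₁ e₂ := by
  cases e₁ <;> cases e₂ <;> simp [IsColliderPair, flip, arrowSnd, arrowFst]

lemma eq_fwd_of_not_isColliderPair {e₁ e₂ : EdgeDir} (h : ¬ IsColliderPair e₁ e₂)
    (h₁ : e₁.arrowSnd) : e₂ = .fwd := by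
  cases e₂ <;> simp_all [IsColliderPair, arrowFst]

lemma arrowSnd_of_ne_back {e : EdgeDir} (h : e ≠ .back) : e.arrowSnd := by
  cases e <;> simp_all [arrowSnd]

end EdgeDir

namespace MixedGraph

variable {V : Type} {G H : MixedGraph V} {x y : V} {Z W : Set V}

lemma IsEdge.flip (hs : ∀ a b, G.bidir a b → G.bidir b a) {e : EdgeDir} {a b : V}
    (h : G.IsEdge e a b) : G.IsEdge e.flip b a := by
  cases e
  exacts [h, h, hs _ _ h]

namespace Walk

def append : {a b c : V} → G.Walk a b → G.Walk b c → G.Walk a c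
  | _, _, _, .nil _, w₂ => w₂
  | _, _, _, .cons e h w, w₂ => .cons e h (w.append w₂)

def reverse (hs : ∀ a b, G.bidir a b → G.bidir b a) : {a b : V} → G.Walk a b → G.Walk b a
  | _, _, .nil v => .nil v
  | _, _, .cons e h w => (w.reverse hs).append (.cons e.flip (h.flip hs) (.nil _))

/-- The type of the last edge of the walk, where `e` is the edge through which it was entered. -/
def lastE (e : EdgeDir) : {a b : V} → G.Walk a b → EdgeDir
  | _, _, .nil _ => e
  | _, _, .cons e' _ w => lastE e' w

def AllBack : {a b : V} → G.Walk a b → Prop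
  | _, _, .nil _ => True
  | _, _, .cons e _ w => e = EdgeDir.back ∧ w.AllBack

def mapLe (hGH : ∀ {e a b}, G.IsEdge e a b → H.IsEdge e a b) :
    {a b : V} → G.Walk a b → H.Walk a b
  | _, _, .nil v => .nil v
  | _, _, .cons e h w => .cons e (hGH h) (w.mapLe hGH)

lemma support_eq_cons : ∀ {a b : V} (w : G.Walk a b), w.support = a :: w.support.tail
  | _, _, .nil _ => rfl
  | _, _, .cons _ _ _ => rfl

lemma start_mem_support {a b : V} (w : G.Walk a b) : a ∈ w.support := by
  rw [support_eq_cons]; exact List.mem_cons_self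

lemma end_mem_support : ∀ {a b : V} (w : G.Walk a b), b ∈ w.support
  | _, _, .nil _ => List.mem_singleton.2 rfl
  | _, _, .cons _ _ w => List.mem_cons_of_mem _ (end_mem_support w)

lemma support_append : ∀ {a b c : V} (w₁ : G.Walk a b) (w₂ : G.Walk b c),
    (w₁.append w₂).support = w₁.support ++ w₂.support.tail
  | _, _, _, .nil _, w₂ => support_eq_cons w₂
  | _, _, _, .cons _ _ w, w₂ => congrArg (_ :: ·) (support_append w w₂)

lemma support_reverse (hs : ∀ a b, G.bidir a b → G.bidir b a) :
    ∀ {a b : V} (w : G.Walk a b), (w.reverse hs).support = w.support.reverse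
  | _, _, .nil _ => rfl
  | _, _, .cons e h w => by
    simp [reverse, support_append, support_reverse hs w, support]

lemma append_assoc : ∀ {a b c d : V} (w₁ : G.Walk a b) (w₂ : G.Walk b c) (w₃ : G.Walk c d),
    (w₁.append w₂).append w₃ = w₁.append (w₂.append w₃)
  | _, _, _, _, .nil _, _, _ => rfl
  | _, _, _, _, .cons _ _ w, w₂, w₃ => congrArg _ (append_assoc w w₂ w₃)

lemma lastE_append (e : EdgeDir) : ∀ {a b c : V} (w₁ : G.Walk a b) (w₂ : G.Walk b c),
    lastE e (w₁.append w₂) = lastE (lastE e w₁) w₂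
  | _, _, _, .nil _, _ => rfl
  | _, _, _, .cons e' _ w, w₂ => lastE_append e' w w₂

lemma lastE_fwd_of_allFwd : ∀ {a b : V} (w : G.Walk a b), w.AllFwd → lastE .fwd w = .fwd
  | _, _, .nil _, _ => rfl
  | _, _, .cons _ _ w, hw => by
    obtain ⟨rfl, hw⟩ := hw
    exact lastE_fwd_of_allFwd w hw

lemma lastE_of_allFwd_of_ne {a b : V} (e : EdgeDir) :
    ∀ (w : G.Walk a b), w.AllFwd → a ≠ b → lastE e w = .fwd
  | .nil _, _, h => absurd rfl h
  | .cons _ _ w, hw, _ => by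
    obtain ⟨rfl, hw⟩ := hw
    exact lastE_fwd_of_allFwd w hw

lemma allFwd_append : ∀ {a b c : V} (w₁ : G.Walk a b) (w₂ : G.Walk b c),
    (w₁.append w₂).AllFwd ↔ w₁.AllFwd ∧ w₂.AllFwd
  | _, _, _, .nil _, w₂ => by simp [append, AllFwd]
  | _, _, _, .cons _ _ w, w₂ => by simp [append, AllFwd, allFwd_append w w₂, and_assoc]

lemma allBack_append : ∀ {a b c : V} (w₁ : G.Walk a b) (w₂ : G.Walk b c),
    (w₁.append w₂).AllBack ↔ w₁.AllBack ∧ w₂.AllBack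
  | _, _, _, .nil _, w₂ => by simp [append, AllBack]
  | _, _, _, .cons _ _ w, w₂ => by simp [append, AllBack, allBack_append w w₂, and_assoc]

lemma allBack_reverse (hs : ∀ a b, G.bidir a b → G.bidir b a) :
    ∀ {a b : V} (w : G.Walk a b), w.AllFwd → (w.reverse hs).AllBack
  | _, _, .nil _, _ => trivial
  | _, _, .cons _ _ w, hw => by
    obtain ⟨rfl, hw⟩ := hw
    exact (allBack_append _ _).2 ⟨allBack_reverse hs w hw, rfl, trivial⟩

lemma eq_of_allFwd_of_allBack : ∀ {a b : V} (w : G.Walk a b), w.AllFwd → w.AllBack → a = b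
  | _, _, .nil _, _, _ => rfl
  | _, _, .cons _ _ _, hf, hb => nomatch hf.1.symm.trans hb.1

lemma exists_eq_append_of_mem_support {v : V} :
    ∀ {a b : V} (w : G.Walk a b), v ∈ w.support →
      ∃ (w₁ : G.Walk a v) (w₂ : G.Walk v b), w = w₁.append w₂
  | _, _, .nil _, hv => by
    obtain rfl := List.mem_singleton.1 hv
    exact ⟨.nil _, .nil _, rfl⟩
  | a, _, .cons e h w, hv => by
    by_cases hav : a = v
    · subst hav
      exact ⟨.nil _, .cons e h w, rfl⟩
    · obtain ⟨w₁, w₂, rfl⟩ := exists_eq_append_of_mem_support w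
        ((List.mem_cons.1 hv).resolve_left (Ne.symm hav))
      exact ⟨.cons e h w₁, w₂, rfl⟩

lemma exists_eq_append_of_exists_mem {S : Set V} : ∀ {a b : V} (w : G.Walk a b),
    (∃ v ∈ w.support, v ∈ S) →
    ∃ (u : V) (w₁ : G.Walk a u) (w₂ : G.Walk u b), w = w₁.append w₂ ∧ u ∈ S ∧
      ∀ v ∈ w₁.support.dropLast, v ∉ S
  | a, _, .nil _, ⟨v, hv, hvS⟩ => by
    obtain rfl := List.mem_singleton.1 hv
    exact ⟨v, .nil _, .nil _, rfl, hvS, by simp [support]⟩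
  | a, _, .cons e h w, ⟨v, hv, hvS⟩ => by
    by_cases haS : a ∈ S
    · exact ⟨a, .nil _, .cons e h w, rfl, haS, by simp [support]⟩
    · have hv' : v ∈ w.support :=
        (List.mem_cons.1 hv).resolve_left (by rintro rfl; exact haS hvS)
      obtain ⟨u, w₁, w₂, rfl, huS, hw₁⟩ := exists_eq_append_of_exists_mem w ⟨v, hv', hvS⟩
      refine ⟨u, .cons e h w₁, w₂, rfl, huS, ?_⟩
      rw [support, support_eq_cons w₁, List.dropLast_cons_of_ne_nil (by simp)]
      rintro v (_ | ⟨_, hv⟩)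
      · exact haS
      · rw [← support_eq_cons w₁] at hv
        exact hw₁ v hv

lemma eq_of_mem_of_mem_of_nodup {v a b c : V} (w₁ : G.Walk a b) (w₂ : G.Walk b c)
    (h : (w₁.append w₂).support.Nodup) (h₁ : v ∈ w₁.support) (h₂ : v ∈ w₂.support) :
    v = b := by
  rw [support_append] at h
  rw [support_eq_cons w₂] at h₂
  rcases List.mem_cons.1 h₂ with rfl | h₂
  · rfl
  · exact absurd h₂ (List.disjoint_of_nodup_append h h₁)

lemma mem_support_append_right {v a b c : V} (w₁ : G.Walk a b) {w₂ : G.Walk b c}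
    (hv : v ∈ w₂.support) : v ∈ (w₁.append w₂).support := by
  rw [support_append]
  rw [support_eq_cons w₂] at hv
  rcases List.mem_cons.1 hv with rfl | hv
  · exact List.mem_append_left _ (end_mem_support w₁)
  · exact List.mem_append_right _ hv

lemma nodup_support_of_append_right {a b c : V} (w₁ : G.Walk a b) (w₂ : G.Walk b c)
    (h : (w₁.append w₂).support.Nodup) : w₂.support.Nodup := by
  rw [support_append] at h
  rw [support_eq_cons w₂]
  exact List.nodup_cons.2
    ⟨fun hb => List.disjoint_of_nodup_append h (end_mem_support w₁) hb, h.of_append_right⟩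

lemma reflTransGen_of_allFwd : ∀ {a b : V} (w : G.Walk a b), w.AllFwd →
    Relation.ReflTransGen G.dir a b
  | _, _, .nil _, _ => .refl
  | _, _, .cons _ h w, hw => by
    obtain ⟨rfl, hw⟩ := hw
    exact .head h (reflTransGen_of_allFwd w hw)

lemma reflTransGen_of_mem_support {v a b : V} (w : G.Walk a b) (hw : w.AllFwd)
    (hv : v ∈ w.support) : Relation.ReflTransGen G.dir a v := by
  obtain ⟨w₁, w₂, rfl⟩ := exists_eq_append_of_mem_support w hv
  exact reflTransGen_of_allFwd w₁ ((allFwd_append w₁ w₂).1 hw).1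

lemma openFrom_append : ∀ {b m c : V} (e : EdgeDir) (w₁ : G.Walk b m) (w₂ : G.Walk m c),
    openFrom W e b (w₁.append w₂) ↔ openFrom W e b w₁ ∧ openFrom W (lastE e w₁) m w₂
  | _, _, _, _, .nil _, _ => by simp [append, openFrom, lastE]
  | _, _, _, _, .cons e₂ _ w, w₂ => by
    simp only [append, openFrom, lastE, openFrom_append e₂ w w₂, and_assoc]

/-- A start node outside `W` behaves like a non-collider entered by a tail. -/
lemma openFrom_back_iff_isOpen {a b : V} (ha : a ∉ W) (w : G.Walk a b) :
    openFrom W .back a w ↔ w.IsOpen W := by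
  cases w <;> simp [openFrom, IsOpen, IsColliderPair, EdgeDir.arrowSnd, ha]

lemma isOpen_reverse_append (hs : ∀ a b, G.bidir a b → G.bidir b a) :
    ∀ {m b a c : V} (w : G.Walk m b) (e : EdgeDir) (h : G.IsEdge e.flip m a) (t : G.Walk a c),
      openFrom W e m w → openFrom W e.flip a t →
      ((w.reverse hs).append (.cons e.flip h t)).IsOpen W
  | _, _, _, _, .nil _, _, _, _, _, ht => ht
  | _, _, _, _, .cons e₂ h₂ w₂, e, h, t, hw, ht => by
    obtain ⟨hcol, hncol, hw₂⟩ := hw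
    rw [reverse, append_assoc]
    refine isOpen_reverse_append hs w₂ e₂ (h₂.flip hs) _ hw₂ ⟨?_, ?_, ht⟩
    · exact fun hc => hcol ((EdgeDir.isColliderPair_flip _ _).1 hc)
    · exact fun hc => hncol (mt (EdgeDir.isColliderPair_flip _ _).2 hc)

lemma isOpen_reverse (hs : ∀ a b, G.bidir a b → G.bidir b a) :
    ∀ {a b : V} (w : G.Walk a b), w.IsOpen W → (w.reverse hs).IsOpen W
  | _, _, .nil _, _ => trivial
  | _, _, .cons e h w, hw => isOpen_reverse_append hs w e (h.flip hs) (.nil _) hw trivial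

lemma openFrom_of_allFwd : ∀ {b c : V} (w : G.Walk b c) (e : EdgeDir), w.AllFwd →
    (∀ v ∈ w.support.dropLast, v ∉ W) → openFrom W e b w
  | _, _, .nil _, _, _, _ => trivial
  | _, _, .cons _ _ w, _, hf, hW => by
    obtain ⟨rfl, hf⟩ := hf
    rw [support, support_eq_cons w, List.dropLast_cons_of_ne_nil (by simp),
      ← support_eq_cons w] at hW
    exact ⟨fun hc => hc.2.elim, fun _ => hW _ List.mem_cons_self,
      openFrom_of_allFwd w _ hf fun v hv => hW v (List.mem_cons_of_mem _ hv)⟩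

lemma openFrom_of_allBack : ∀ {b c : V} (w : G.Walk b c) (e : EdgeDir), w.AllBack →
    (e.arrowSnd ↔ b ∈ W) → (∀ v ∈ w.support.tail.dropLast, v ∉ W) → openFrom W e b w
  | _, _, .nil _, _, _, _, _ => trivial
  | _, _, .cons _ _ (.nil _), _, hb, hstart, _ => by
    obtain ⟨rfl, -⟩ := hb
    exact ⟨fun hc => hstart.1 hc.1, fun hc => mt hstart.2 fun h => hc ⟨h, trivial⟩, trivial⟩
  | _, _, .cons _ _ (.cons e₃ h₃ w₃), _, hb, hstart, hW => by
    obtain ⟨rfl, hb⟩ := hb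
    simp only [support, List.tail_cons] at hW
    rw [support_eq_cons w₃, List.dropLast_cons_of_ne_nil (by simp), ← support_eq_cons w₃] at hW
    refine ⟨fun hc => hstart.1 hc.1, fun hc => mt hstart.2 fun h => hc ⟨h, trivial⟩, ?_⟩
    refine openFrom_of_allBack (.cons e₃ h₃ w₃) _ hb ?_ fun v hv => hW v (.tail _ ?_)
    · exact iff_of_false id (hW _ List.mem_cons_self)
    · rwa [support, List.tail_cons] at hv

lemma openFrom_reverse_append (hs : ∀ a b, G.bidir a b → G.bidir b a) {c u b : V}
    {e : EdgeDir} {ρ : G.Walk c u} {π : G.Walk c b} (hρ : ρ.AllFwd) (hπ : π.AllFwd)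
    (hρW : ∀ v ∈ ρ.support.dropLast, v ∉ W) (hπW : ∀ v ∈ π.support, v ∉ W)
    (hu : e.arrowSnd ↔ u ∈ W) :
    openFrom W e u ((ρ.reverse hs).append π) := by
  refine (openFrom_append _ _ _).2 ⟨openFrom_of_allBack _ _ (allBack_reverse hs ρ hρ) hu ?_,
    openFrom_of_allFwd _ _ hπ fun v hv => hπW v (List.dropLast_subset _ hv)⟩
  intro v hv
  rw [support_reverse, List.tail_reverse] at hv
  exact hρW v (List.mem_reverse.1 (List.dropLast_subset _ hv))

lemma endsWithDirFrom_append : ∀ {a b c : V} (w₁ : G.Walk a b) (w₂ : G.Walk b c),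
    (w₁.append w₂).EndsWithDirFrom x →
      (w₁.EndsWithDirFrom x ∧ w₂.AllFwd) ∨ w₂.EndsWithDirFrom x
  | _, _, _, .nil _, _, h => .inr h
  | _, _, _, .cons _ _ w, w₂, h => by
    rcases h with ⟨rfl, rfl, hf⟩ | h
    · rw [allFwd_append] at hf
      exact .inl ⟨.inl ⟨rfl, rfl, hf.1⟩, hf.2⟩
    · exact (endsWithDirFrom_append w w₂ h).imp_left fun h => ⟨.inr h.1, h.2⟩

lemma mem_support_of_endsWithDirFrom : ∀ {a b : V} (w : G.Walk a b), w.AllFwd →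
    w.EndsWithDirFrom x → x ∈ w.support
  | _, _, .nil _, _, h => List.mem_singleton.2 h.symm
  | _, _, .cons _ _ w, hf, h => by
    rcases h with ⟨rfl, -⟩ | h
    · exact List.mem_cons_self
    · exact List.mem_cons_of_mem _ (mem_support_of_endsWithDirFrom w hf.2 h)

lemma eq_of_endsWithDirFrom_of_allBack : ∀ {a b : V} (w : G.Walk a b), w.AllBack →
    w.EndsWithDirFrom x → b = x
  | _, _, .nil _, _, h => h
  | _, _, .cons _ _ w, hb, h => by
    rcases h with ⟨-, rfl, -⟩ | h
    · exact nomatch hb.1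
    · exact eq_of_endsWithDirFrom_of_allBack w hb.2 h

lemma not_endsWithDirFrom_reverse_append (hs : ∀ a b, G.bidir a b → G.bidir b a)
    {c u b : V} {ρ : G.Walk c u} {π : G.Walk c b} (hρ : ρ.AllFwd) (hπ : π.AllFwd)
    (hx : x ∉ π.support) : ¬ ((ρ.reverse hs).append π).EndsWithDirFrom x := by
  intro h
  rcases endsWithDirFrom_append _ _ h with ⟨h, -⟩ | h
  · rw [← eq_of_endsWithDirFrom_of_allBack _ (allBack_reverse hs ρ hρ) h] at hx
    exact hx π.start_mem_support
  · exact hx (mem_support_of_endsWithDirFrom π hπ h)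

lemma openFrom_mapLe (hGH : ∀ {e a b}, G.IsEdge e a b → H.IsEdge e a b) :
    ∀ {a b : V} (e : EdgeDir) (w : G.Walk a b),
      openFrom W e a (w.mapLe hGH) ↔ openFrom W e a w
  | _, _, _, .nil _ => Iff.rfl
  | _, _, _, .cons e₂ _ w => by simp only [mapLe, openFrom, openFrom_mapLe hGH e₂ w]

lemma isOpen_mapLe (hGH : ∀ {e a b}, G.IsEdge e a b → H.IsEdge e a b) {a b : V}
    (w : G.Walk a b) : (w.mapLe hGH).IsOpen W ↔ w.IsOpen W := by
  cases w
  · exact Iff.rfl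
  · exact openFrom_mapLe hGH _ _

lemma allFwd_mapLe (hGH : ∀ {e a b}, G.IsEdge e a b → H.IsEdge e a b) :
    ∀ {a b : V} (w : G.Walk a b), (w.mapLe hGH).AllFwd ↔ w.AllFwd
  | _, _, .nil _ => Iff.rfl
  | _, _, .cons _ _ w => by simp only [mapLe, AllFwd, allFwd_mapLe hGH w]

lemma endsWithDirFrom_mapLe (hGH : ∀ {e a b}, G.IsEdge e a b → H.IsEdge e a b) :
    ∀ {a b : V} (w : G.Walk a b), (w.mapLe hGH).EndsWithDirFrom x ↔ w.EndsWithDirFrom x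
  | _, _, .nil _ => Iff.rfl
  | _, _, .cons _ _ w => by
    simp only [mapLe, EndsWithDirFrom, allFwd_mapLe hGH w, endsWithDirFrom_mapLe hGH w]

/-- Every node reached is a descendant of `S`, hence outside `W`; entered through an arrowhead,
it must be a non-collider, so the walk leaves it by a directed edge. -/
lemma allFwd_of_openFrom {S : Set V} (hW : Disjoint (G.descSet S) W) :
    ∀ {c b : V} (w : G.Walk c b) (e : EdgeDir), e.arrowSnd → c ∈ G.descSet S →
      openFrom W e c w → w.AllFwd
  | _, _, .nil _, _, _, _, _ => trivial
  | _, _, .cons e₂ h₂ w₂, e, he, hc, ho => by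
    obtain ⟨hcol, -, ho₂⟩ := ho
    obtain rfl :=
      EdgeDir.eq_fwd_of_not_isColliderPair (fun h => Set.disjoint_left.1 hW hc (hcol h)) he
    obtain ⟨s, hs, hsc⟩ := hc
    exact ⟨rfl, allFwd_of_openFrom hW w₂ .fwd trivial ⟨s, hs, hsc.tail h₂⟩ ho₂⟩

end Walk

lemma exists_walk_allFwd_nodup {a b : V} (h : Relation.ReflTransGen G.dir a b) :
    ∃ w : G.Walk a b, w.AllFwd ∧ w.support.Nodup := by
  induction h using Relation.ReflTransGen.head_induction_on with
  | refl => exact ⟨.nil _, trivial, List.nodup_singleton _⟩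
  | @head a m hd _ ih =>
    obtain ⟨w, hw, hnd⟩ := ih
    by_cases ha : a ∈ w.support
    · obtain ⟨w₁, w₂, rfl⟩ := Walk.exists_eq_append_of_mem_support w ha
      exact ⟨w₂, ((Walk.allFwd_append w₁ w₂).1 hw).2,
        Walk.nodup_support_of_append_right w₁ w₂ hnd⟩
    · exact ⟨.cons .fwd hd w, ⟨rfl, hw⟩, List.nodup_cons.2 ⟨ha, hnd⟩⟩

lemma dConn_singleton_iff (hs : ∀ a b, G.bidir a b → G.bidir b a) {a : V} :
    G.dConn {a} Z W ↔ ∃ z ∈ Z, ∃ w : G.Walk z a, w.IsOpen W := by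
  constructor
  · rintro ⟨_, rfl, z, hz, w, hw⟩
    exact ⟨z, hz, w.reverse hs, Walk.isOpen_reverse hs w hw⟩
  · rintro ⟨z, hz, w, hw⟩
    exact ⟨a, rfl, z, hz, w.reverse hs, Walk.isOpen_reverse hs w hw⟩

lemma notMem_descSet_causal (hG : G.IsADMG) : x ∉ G.descSet (G.causal x y) := by
  rintro ⟨c, ⟨hcx, π, hπ, -, hc⟩, hcx'⟩
  rcases Relation.reflTransGen_iff_eq_or_transGen.1 (π.reflTransGen_of_mem_support hπ hc) with
    rfl | hxc
  · exact hcx rfl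
  · exact hG.2 x (hxc.trans_left hcx')

lemma mem_causal_of_dir (hG : G.IsADMG) {v : V} (hxv : G.dir x v)
    (hvy : Relation.ReflTransGen G.dir v y) : v ∈ G.causal x y := by
  obtain ⟨w, hw, hnd⟩ := exists_walk_allFwd_nodup hvy
  have hxw : x ∉ w.support := fun hx =>
    hG.2 x (Relation.TransGen.head' hxv (w.reflTransGen_of_mem_support hw hx))
  exact ⟨fun h => hxw (h ▸ w.start_mem_support), .cons .fwd hxv w, ⟨rfl, hw⟩,
    List.nodup_cons.2 ⟨hxw, hnd⟩, List.mem_cons_of_mem _ w.start_mem_support⟩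

lemma exists_walks_of_mem_causal {c : V} (hc : c ∈ G.causal x y) :
    ∃ (π₁ : G.Walk x c) (π₂ : G.Walk c y), π₁.AllFwd ∧ π₂.AllFwd ∧
      (∀ v ∈ π₁.support, v = x ∨ v ∈ G.causal x y) ∧ ∀ v ∈ π₂.support, v ∈ G.causal x y := by
  obtain ⟨hcx, π, hπ, hnd, hcπ⟩ := hc
  obtain ⟨π₁, π₂, rfl⟩ := π.exists_eq_append_of_mem_support hcπ
  rw [Walk.allFwd_append] at hπ
  have hmem : ∀ v ∈ (π₁.append π₂).support, v = x ∨ v ∈ G.causal x y := fun v hv =>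
    or_iff_not_imp_left.2 fun hvx => ⟨hvx, _, (Walk.allFwd_append _ _).2 hπ, hnd, hv⟩
  refine ⟨π₁, π₂, hπ.1, hπ.2, fun v hv => hmem v ?_, fun v hv => (hmem v ?_).resolve_left ?_⟩
  · rw [Walk.support_append]
    exact List.mem_append_left _ hv
  · exact π₁.mem_support_append_right hv
  · rintro rfl
    exact hcx (Walk.eq_of_mem_of_mem_of_nodup π₁ π₂ hnd π₁.start_mem_support hv).symm

lemma inter_forb_eq_empty_iff :
    (Z ∪ W) ∩ G.forb x y = ∅ ↔
      Disjoint (G.descSet (G.causal x y)) Z ∧ Disjoint (G.descSet (G.causal x y)) W ∧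
        x ∉ Z ∧ x ∉ W := by
  simp only [forb, Set.eq_empty_iff_forall_notMem, Set.disjoint_left, Set.mem_inter_iff,
    Set.mem_union, Set.mem_singleton_iff]
  constructor
  · intro h
    exact ⟨fun v hv hvZ => h v ⟨.inl hvZ, .inl hv⟩, fun v hv hvW => h v ⟨.inr hvW, .inl hv⟩,
      fun hx => h x ⟨.inl hx, .inr rfl⟩, fun hx => h x ⟨.inr hx, .inr rfl⟩⟩
  · rintro ⟨hZ, hW, hxZ, hxW⟩ v ⟨hZW | hZW, hv | rfl⟩
    exacts [hZ hv hZW, hxZ hZW, hW hv hZW, hxW hZW]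

lemma isEdge_of_isEdge_tilde {e : EdgeDir} {a b : V} (h : (G.tilde x y).IsEdge e a b) :
    G.IsEdge e a b := by
  cases e
  exacts [h.1, h.1, h]

lemma not_endsWithDirFrom_tilde (hG : G.IsADMG) : ∀ {a b : V} (q : (G.tilde x y).Walk a b),
    Relation.ReflTransGen G.dir b y → b ≠ x → ¬ q.EndsWithDirFrom x
  | _, _, .nil _, _, hbx, h => hbx h
  | _, _, .cons _ h w, hby, hbx, hq => by
    rcases hq with ⟨rfl, rfl, hw⟩ | hq
    · have hwy := Relation.ReflTransGen.mono (fun _ _ h => h.1) _ _ (w.reflTransGen_of_allFwd hw)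
      exact h.2 ⟨rfl, mem_causal_of_dir hG h.1 (hwy.trans hby)⟩
    · exact not_endsWithDirFrom_tilde hG w hby hbx hq

lemma exists_tilde_openFrom_of_allFwd (hxD : x ∉ G.descSet (G.causal x y))
    (hW : Disjoint (G.descSet (G.causal x y)) W) :
    ∀ {m b : V} (w : G.Walk m b) (e : EdgeDir), w.AllFwd → m ∈ G.descSet (G.causal x y) →
      ∃ w' : (G.tilde x y).Walk m b, Walk.openFrom W e m w'
  | _, _, .nil _, _, _, _ => ⟨.nil _, trivial⟩
  | m, _, @Walk.cons _ _ _ n _ _ h w, _, hw, hm => by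
    obtain ⟨rfl, hw⟩ := hw
    obtain ⟨s, hs, hsm⟩ := hm
    obtain ⟨w', hw'⟩ := exists_tilde_openFrom_of_allFwd hxD hW w .fwd hw ⟨s, hs, hsm.tail h⟩
    have hmx : ¬ (m = x ∧ n ∈ G.causal x y) := by
      rintro ⟨rfl, -⟩
      exact hxD ⟨s, hs, hsm⟩
    refine ⟨.cons .fwd ⟨h, hmx⟩ w', fun hc => hc.2.elim,
      fun _ => Set.disjoint_left.1 hW ⟨s, hs, hsm⟩, hw'⟩

lemma exists_tilde_openFrom (hxD : x ∉ G.descSet (G.causal x y))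
    (hW : Disjoint (G.descSet (G.causal x y)) W) :
    ∀ {a b : V} (w : G.Walk a b) (e : EdgeDir), a ∉ G.descSet (G.causal x y) →
      Walk.openFrom W e a w →
      w.EndsWithDirFrom x ∨ ∃ w' : (G.tilde x y).Walk a b, Walk.openFrom W e a w'
  | _, _, .nil _, _, _, _ => .inr ⟨.nil _, trivial⟩
  | a, _, @Walk.cons _ _ _ m _ e₂ h₂ w₂, _, ha, ho => by
    obtain ⟨hcol, hncol, ho₂⟩ := ho
    by_cases hm : m ∈ G.descSet (G.causal x y)
    · have he₂ : e₂.arrowSnd := EdgeDir.arrowSnd_of_ne_back <| by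
        rintro rfl
        obtain ⟨s, hs, hsm⟩ := hm
        exact ha ⟨s, hs, hsm.tail h₂⟩
      have hw₂ := Walk.allFwd_of_openFrom hW w₂ e₂ he₂ hm ho₂
      by_cases hx : a = x ∧ e₂ = .fwd
      · exact .inl (.inl ⟨hx.1, hx.2, hw₂⟩)
      obtain ⟨w₂', hw₂'⟩ := exists_tilde_openFrom_of_allFwd hxD hW w₂ e₂ hw₂ hm
      have h₂' : (G.tilde x y).IsEdge e₂ a m := by
        cases e₂
        exacts [⟨h₂, fun h => hx ⟨h.1, rfl⟩⟩, he₂.elim, h₂]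
      exact .inr ⟨.cons e₂ h₂' w₂', hcol, hncol, hw₂'⟩
    · have h₂' : (G.tilde x y).IsEdge e₂ a m := by
        cases e₂
        exacts [⟨h₂, fun h => hm ⟨m, h.2, .refl⟩⟩, ⟨h₂, fun h => ha ⟨a, h.2, .refl⟩⟩, h₂]
      rcases exists_tilde_openFrom hxD hW w₂ e₂ hm ho₂ with h | ⟨w₂', hw₂'⟩
      · exact .inl (.inr h)
      · exact .inr ⟨.cons e₂ h₂' w₂', hcol, hncol, hw₂'⟩

lemma exists_tilde_isOpen (hxD : x ∉ G.descSet (G.causal x y))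
    (hW : Disjoint (G.descSet (G.causal x y)) W) {z b : V} (hzD : z ∉ G.descSet (G.causal x y))
    (hzW : z ∉ W) (p : G.Walk z b) (hp : p.IsOpen W) (hpx : ¬ p.EndsWithDirFrom x) :
    ∃ p' : (G.tilde x y).Walk z b, p'.IsOpen W := by
  rw [← Walk.openFrom_back_iff_isOpen hzW] at hp
  obtain h | ⟨p', hp'⟩ := exists_tilde_openFrom hxD hW p .back hzD hp
  · exact absurd h hpx
  · exact ⟨p', (Walk.openFrom_back_iff_isOpen hzW p').1 hp'⟩

lemma not_tilde_dConn (hG : G.IsADMG) (hxy : x ≠ y)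
    (hy : ∀ z ∈ Z, ∀ w : G.Walk z y, w.IsOpen W → w.EndsWithDirFrom x) :
    ¬ (G.tilde x y).dConn {y} Z W := by
  rw [dConn_singleton_iff (G := G.tilde x y) hG.1]
  rintro ⟨z, hz, q, hq⟩
  have hqx := hy z hz (q.mapLe isEdge_of_isEdge_tilde) ((Walk.isOpen_mapLe _ q).2 hq)
  exact not_endsWithDirFrom_tilde hG q .refl (Ne.symm hxy) ((Walk.endsWithDirFrom_mapLe _ q).1 hqx)

/-- For `u ∈ W` below `c ∈ causal(x,y)`, the walk `z₀ ⋯ x → ⋯ → c → ⋯ → u' ← ⋯ ← c → ⋯ → y`,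
with `u'` the first node of `W` below `c`, is open and does not end with `x → ⋯ → y`. -/
lemma disjoint_descSet_causal_cond (hs : ∀ a b, G.bidir a b → G.bidir b a) {z₀ : V} (hz₀ : z₀ ∉ W)
    (p₀ : G.Walk z₀ x) (hp₀ : p₀.IsOpen W) (hxW : x ∉ W) (hCW : Disjoint (G.causal x y) W)
    (hy : ∀ w : G.Walk z₀ y, w.IsOpen W → w.EndsWithDirFrom x) :
    Disjoint (G.descSet (G.causal x y)) W := by
  rw [Set.disjoint_left]
  rintro u ⟨c, hc, hcu⟩ huW
  obtain ⟨π₁, π₂, hπ₁, hπ₂, hπ₁C, hπ₂C⟩ := exists_walks_of_mem_causal hc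
  have hCW' := Set.disjoint_left.1 hCW
  obtain ⟨ρ, hρ, -⟩ := exists_walk_allFwd_nodup hcu
  obtain ⟨u', ρ₁, ρ₂, rfl, hu'W, hρ₁W⟩ :=
    ρ.exists_eq_append_of_exists_mem ⟨u, ρ.end_mem_support, huW⟩
  have hρ₁ := ((Walk.allFwd_append ρ₁ ρ₂).1 hρ).1
  have hcu' : c ≠ u' := fun h => hCW' hc (h ▸ hu'W)
  have hT : ¬ ((ρ₁.reverse hs).append π₂).AllFwd := fun h =>
    hcu' (Walk.eq_of_allFwd_of_allBack _ ((Walk.allFwd_append _ _).1 h).1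
      (Walk.allBack_reverse hs ρ₁ hρ₁)).symm
  have hopen : (((p₀.append π₁).append ρ₁).append ((ρ₁.reverse hs).append π₂)).IsOpen W := by
    have hlast : Walk.lastE .back ((p₀.append π₁).append ρ₁) = .fwd := by
      rw [Walk.lastE_append]
      exact Walk.lastE_of_allFwd_of_ne _ ρ₁ hρ₁ hcu'
    rw [← Walk.openFrom_back_iff_isOpen hz₀, Walk.openFrom_append, Walk.openFrom_append,
      Walk.openFrom_append, hlast]
    refine ⟨⟨⟨(Walk.openFrom_back_iff_isOpen hz₀ p₀).2 hp₀, ?_⟩, ?_⟩, ?_⟩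
    · exact Walk.openFrom_of_allFwd _ _ hπ₁ fun v hv =>
        (hπ₁C v (List.dropLast_subset _ hv)).elim (· ▸ hxW) (hCW' ·)
    · exact Walk.openFrom_of_allFwd _ _ hρ₁ hρ₁W
    · exact Walk.openFrom_reverse_append hs hρ₁ hπ₂ hρ₁W (fun v hv => hCW' (hπ₂C v hv))
        (iff_of_true trivial hu'W)
  rcases Walk.endsWithDirFrom_append _ _ (hy _ hopen) with ⟨-, h⟩ | h
  · exact hT h
  · exact Walk.not_endsWithDirFrom_reverse_append hs hρ₁ hπ₂ (fun hx => (hπ₂C x hx).1 rfl) h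

lemma disjoint_descSet_causal_instr (hs : ∀ a b, G.bidir a b → G.bidir b a) (hZW : Disjoint Z W)
    (hDW : Disjoint (G.descSet (G.causal x y)) W)
    (hy : ∀ z ∈ Z, ∀ w : G.Walk z y, w.IsOpen W → w.EndsWithDirFrom x) :
    Disjoint (G.descSet (G.causal x y)) Z := by
  rw [Set.disjoint_left]
  rintro u ⟨c, hc, hcu⟩ huZ
  obtain ⟨-, π₂, -, hπ₂, -, hπ₂C⟩ := exists_walks_of_mem_causal hc
  obtain ⟨ρ, hρ, -⟩ := exists_walk_allFwd_nodup hcu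
  have huW := Set.disjoint_left.1 hZW huZ
  have hopen : ((ρ.reverse hs).append π₂).IsOpen W := by
    rw [← Walk.openFrom_back_iff_isOpen huW]
    refine Walk.openFrom_reverse_append hs hρ hπ₂ (fun v hv => Set.disjoint_left.1 hDW ?_)
      (fun v hv => Set.disjoint_left.1 hDW ⟨v, hπ₂C v hv, .refl⟩) (iff_of_false id huW)
    exact ⟨c, hc, ρ.reflTransGen_of_mem_support hρ (List.dropLast_subset _ hv)⟩
  exact Walk.not_endsWithDirFrom_reverse_append hs hρ hπ₂ (fun hx => (hπ₂C x hx).1 rfl)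
    (hy u huZ _ hopen)

end MixedGraph

/-- Let `Z`, `{x}`, `W` be pairwise disjoint node sets in an ADMG `G`
with node set `V`. Let `O₁` be the set of nodes `v` such that some directed path from `x`
to `v` contains a node of `W`, and `O₃` the set of nodes `v` such that some walk from `Z`
to `v` is open given `W` and does not end with a segment of the form `x → ⋯ → v`.
If no walk from `Z` to `x` is open given `W`, then there is no node `y` such that `(Z,W)`
is a valid conditional instrumental set relative to `(x,y)` in `G`; otherwise, the set of
nodes `y` such that `(Z,W)` is a valid conditional instrumental set relative to `(x,y)`
in `G` equals `V ∖ (O₁ ∪ O₃ ∪ Z ∪ W ∪ {x})`. -/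
theorem valid_cis_targets_eq {V : Type} (G : MixedGraph V) (hG : G.IsADMG)
    (x : V) (Z W : Set V)
    (hxZ : x ∉ Z) (hxW : x ∉ W) (hZW : Disjoint Z W) :
    (¬ (∃ z ∈ Z, ∃ w : G.Walk z x, w.IsOpen W) →
      ∀ y : V, ¬ G.ValidCIS x y Z W) ∧
    ((∃ z ∈ Z, ∃ w : G.Walk z x, w.IsOpen W) →
      {y | G.ValidCIS x y Z W} =
        ({v | ∃ w : G.Walk x v, w.AllFwd ∧ w.support.Nodup ∧ ∃ u ∈ w.support, u ∈ W} ∪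
         {v | ∃ z ∈ Z, ∃ w : G.Walk z v, w.IsOpen W ∧ ¬ w.EndsWithDirFrom x} ∪
         Z ∪ W ∪ {x})ᶜ) := by
  open MixedGraph in
  refine ⟨fun h y ⟨_, _, _, _, _, _, _, hx, _⟩ => h ((dConn_singleton_iff hG.1).1 hx),
    fun hconn => ?_⟩
  ext y
  simp only [Set.mem_ofPred_eq, Set.mem_compl_iff, Set.mem_union, Set.mem_singleton_iff, not_or]
  constructor
  · rintro ⟨hxy, -, -, hyZ, hyW, -, hforb, -, hsep⟩
    obtain ⟨hDZ, hDW, -, -⟩ := inter_forb_eq_empty_iff.1 hforb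
    refine ⟨⟨⟨⟨?_, ?_⟩, hyZ⟩, hyW⟩, Ne.symm hxy⟩
    · rintro ⟨π, hπ, hnd, u, hu, huW⟩
      have hux : u ≠ x := fun h => hxW (h ▸ huW)
      exact Set.disjoint_left.1 hDW ⟨u, ⟨hux, π, hπ, hnd, hu⟩, .refl⟩ huW
    · rintro ⟨z, hz, p, hp, hpx⟩
      obtain ⟨p', hp'⟩ := exists_tilde_isOpen (notMem_descSet_causal hG) hDW
        (Set.disjoint_right.1 hDZ hz) (Set.disjoint_left.1 hZW hz) p hp hpx
      exact hsep ((dConn_singleton_iff (G := G.tilde x y) hG.1).2 ⟨z, hz, p', hp'⟩)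
  · rintro ⟨⟨⟨⟨hO₁, hO₃⟩, hyZ⟩, hyW⟩, hyx⟩
    have hy : ∀ z ∈ Z, ∀ w : G.Walk z y, w.IsOpen W → w.EndsWithDirFrom x :=
      fun z hz w hw => by_contra fun h => hO₃ ⟨z, hz, w, hw, h⟩
    have hCW : Disjoint (G.causal x y) W := Set.disjoint_left.2
      fun c ⟨_, π, hπ, hnd, hc⟩ hcW => hO₁ ⟨π, hπ, hnd, c, hc, hcW⟩
    obtain ⟨z₀, hz₀, p₀, hp₀⟩ := hconn
    have hDW := disjoint_descSet_causal_cond hG.1 (Set.disjoint_left.1 hZW hz₀) p₀ hp₀ hxW hCW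
      (hy z₀ hz₀)
    exact ⟨Ne.symm hyx, hxZ, hxW, hyZ, hyW, hZW,
      inter_forb_eq_empty_iff.2 ⟨disjoint_descSet_causal_instr hG.1 hZW hDW hy, hDW, hxZ, hxW⟩,
      (dConn_singleton_iff hG.1).2 ⟨z₀, hz₀, p₀, hp₀⟩, not_tilde_dConn hG (Ne.symm hyx) hy⟩
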